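/- For every real α ≥ 1 and every real z > (√α + 1)², the Cauchy transform of μ_α is given by ∫ 1/(z − x) dμ_α(x) = ( z − (α − 1) − √((z − (α − 1))² − 4z) ) / (2z), where the square root is the nonnegative real square root (note (z − (α−1))² − 4z > 0 for such z). -/

import Mathlib

open MeasureTheory

noncomputable section

/-- The free Poisson density with parameter `α`:
`f_α(x) = √(4x − (x − (α−1))²) / (2πx)` on `[(√α − 1)², (√α + 1)²]` and `0` elsewhere. -/
def freePoissonDensity (α : ℝ) : ℝ → ℝ :=
  (Set.Icc ((Real.sqrt α - 1) ^ 2) ((Real.sqrt α + 1) ^ 2)).indicator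
    fun x => Real.sqrt (4 * x - (x - (α - 1)) ^ 2) / (2 * Real.pi * x)

/-- The free Poisson law `μ_α`: the measure on `ℝ` absolutely continuous with respect
to Lebesgue measure with density `f_α`. -/
def freePoissonLaw (α : ℝ) : Measure ℝ :=
  volume.withDensity fun x => ENNReal.ofReal (freePoissonDensity α x)

/-! Write `α = R²` with `R ≥ 1`, so that `4x - (x - (α - 1))² = ((R + 1)² - x)(x - (R - 1)²)`.
For `Q(x) = 4x - (x - (α - 1))²` partial fractions give
`z Q(x) / (x (z - x)) = z + Q(0) / x + Q(z) / (z - x)` with `Q(0) = -(α - 1)²` and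
`Q(z) = -W²`, `W = √((z - (α - 1))² - 4z)`. Dividing by `√Q`, each of the three terms is the
derivative of a multiple of `arcsin` of a linear fractional function, and these arguments are
`±1` at the endpoints `(R ∓ 1)²`. The fundamental theorem of calculus then yields
`π (z - (α - 1) - W) / (2π z)`; integrability is automatic since the integrand is nonnegative. -/

open Real Set MeasureTheory intervalIntegral

theorem integral_withDensity_ofReal {X : Type*} [MeasurableSpace X] {μ : Measure X} {f : X → ℝ}
    (hf : Measurable f) (hf0 : ∀ x, 0 ≤ f x) (g : X → ℝ) :
    ∫ x, g x ∂μ.withDensity (fun x => ENNReal.ofReal (f x)) = ∫ x, f x * g x ∂μ := by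
  rw [integral_withDensity_eq_integral_toReal_smul hf.ennreal_ofReal
    (ae_of_all _ fun _ => ENNReal.ofReal_lt_top) g]
  simp only [ENNReal.toReal_ofReal (hf0 _), smul_eq_mul]

theorem HasDerivAt.arcsin_div {N D : ℝ → ℝ} {N' D' x s : ℝ} (hN : HasDerivAt N N' x)
    (hD : HasDerivAt D D' x) (hD0 : 0 < D x) (hs0 : 0 < s) (hs : D x ^ 2 - N x ^ 2 = s ^ 2) :
    HasDerivAt (fun y => arcsin (N y / D y)) ((N' * D x - N x * D') / (D x * s)) x := by
  have hsq : 1 - (N x / D x) ^ 2 = (s / D x) ^ 2 := by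
    field_simp
    linear_combination hs
  have hne : ∀ ε : ℝ, ε ^ 2 = 1 → N x / D x ≠ ε := by
    rintro ε hε rfl
    rw [hε, sub_self] at hsq
    exact (pow_pos (div_pos hs0 hD0) 2).ne hsq
  have h := (hasDerivAt_arcsin (hne (-1) (by norm_num)) (hne 1 (by norm_num))).comp x
    (hN.div hD hD0.ne')
  rw [hsq, sqrt_sq (div_pos hs0 hD0).le] at h
  refine h.congr_deriv ?_
  field_simp

lemma measurable_freePoissonDensity (α : ℝ) : Measurable (freePoissonDensity α) :=
  Measurable.indicator (by fun_prop) measurableSet_Icc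

lemma freePoissonDensity_nonneg (α x : ℝ) : 0 ≤ freePoissonDensity α x := by
  refine indicator_nonneg (fun y hy => ?_) x
  have : 0 ≤ y := (sq_nonneg _).trans hy.1
  positivity

lemma integral_freePoissonLaw (α : ℝ) (g : ℝ → ℝ) :
    ∫ x, g x ∂freePoissonLaw α = ∫ x in (√α - 1) ^ 2..(√α + 1) ^ 2,
      √(4 * x - (x - (α - 1)) ^ 2) / (2 * π * x) * g x := by
  have hle : (√α - 1) ^ 2 ≤ (√α + 1) ^ 2 := by nlinarith [sqrt_nonneg α]
  rw [freePoissonLaw, integral_withDensity_ofReal (measurable_freePoissonDensity α)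
    (freePoissonDensity_nonneg α), integral_of_le hle, ← integral_Icc_eq_integral_Ioc,
    ← MeasureTheory.integral_indicator measurableSet_Icc]
  simp only [freePoissonDensity, indicator_mul_left]

section CauchyPrimitive

variable {R z W x : ℝ}

def freePoissonCauchyPrimitive (R z W x : ℝ) : ℝ :=
  z * arcsin ((x - (R ^ 2 + 1)) / (2 * R))
    + (R ^ 2 - 1) * arcsin (((R ^ 2 - 1) ^ 2 - (R ^ 2 + 1) * x) / (2 * R * x))
    + W * arcsin ((4 * R ^ 2 - (z - (R ^ 2 + 1)) * (x - (R ^ 2 + 1))) / (2 * R * (z - x)))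

lemma four_mul_sub_sq_eq :
    4 * x - (x - (R ^ 2 - 1)) ^ 2 = ((R + 1) ^ 2 - x) * (x - (R - 1) ^ 2) := by
  ring

lemma hasDerivAt_freePoissonCauchyPrimitive_term₁ (hR : 0 < R)
    (hQ : 0 < 4 * x - (x - (R ^ 2 - 1)) ^ 2) :
    HasDerivAt (fun y => arcsin ((y - (R ^ 2 + 1)) / (2 * R)))
      (1 / √(4 * x - (x - (R ^ 2 - 1)) ^ 2)) x := by
  have h := ((hasDerivAt_id' x).sub_const (R ^ 2 + 1)).arcsin_div (hasDerivAt_const x (2 * R))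
    (by positivity) (sqrt_pos.2 hQ) (by rw [sq_sqrt hQ.le]; ring)
  refine h.congr_deriv ?_
  field_simp
  ring

lemma hasDerivAt_freePoissonCauchyPrimitive_term₂ (hR : 1 ≤ R) (hx : 0 < x)
    (hQ : 0 < 4 * x - (x - (R ^ 2 - 1)) ^ 2) :
    HasDerivAt (fun y => (R ^ 2 - 1) * arcsin (((R ^ 2 - 1) ^ 2 - (R ^ 2 + 1) * y) / (2 * R * y)))
      (-(R ^ 2 - 1) ^ 2 / (x * √(4 * x - (x - (R ^ 2 - 1)) ^ 2))) x := by
  obtain rfl | hR1 := hR.eq_or_lt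
  · simpa using hasDerivAt_const x (0 : ℝ)
  have hα : 0 < R ^ 2 - 1 := by nlinarith
  set S := √(4 * x - (x - (R ^ 2 - 1)) ^ 2)
  have hS : 0 < S := sqrt_pos.2 hQ
  have hS2 : S ^ 2 = 4 * x - (x - (R ^ 2 - 1)) ^ 2 := sq_sqrt hQ.le
  have h := (((hasDerivAt_id' x).const_mul (R ^ 2 + 1)).const_sub ((R ^ 2 - 1) ^ 2)).arcsin_div
    ((hasDerivAt_id' x).const_mul (2 * R)) (by positivity) (mul_pos hα hS)
    (by linear_combination -(R ^ 2 - 1) ^ 2 * hS2)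
  refine (h.const_mul (R ^ 2 - 1)).congr_deriv ?_
  field_simp
  ring

lemma hasDerivAt_freePoissonCauchyPrimitive_term₃ (hR : 0 < R) (hxz : x < z) (hW0 : 0 < W)
    (hW : W ^ 2 = (z - (R ^ 2 - 1)) ^ 2 - 4 * z) (hQ : 0 < 4 * x - (x - (R ^ 2 - 1)) ^ 2) :
    HasDerivAt
      (fun y => W * arcsin
        ((4 * R ^ 2 - (z - (R ^ 2 + 1)) * (y - (R ^ 2 + 1))) / (2 * R * (z - y))))
      (-W ^ 2 / ((z - x) * √(4 * x - (x - (R ^ 2 - 1)) ^ 2))) x := by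
  have hzx : 0 < z - x := sub_pos.2 hxz
  set S := √(4 * x - (x - (R ^ 2 - 1)) ^ 2)
  have hS : 0 < S := sqrt_pos.2 hQ
  have hS2 : S ^ 2 = 4 * x - (x - (R ^ 2 - 1)) ^ 2 := sq_sqrt hQ.le
  have h := ((((hasDerivAt_id' x).sub_const (R ^ 2 + 1)).const_mul (z - (R ^ 2 + 1))).const_sub
    (4 * R ^ 2)).arcsin_div (((hasDerivAt_id' x).const_sub z).const_mul (2 * R))
    (by positivity) (mul_pos hW0 hS)
    (by linear_combination -W ^ 2 * hS2 - (4 * x - (x - (R ^ 2 - 1)) ^ 2) * hW)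
  refine (h.const_mul W).congr_deriv ?_
  field_simp
  linear_combination hW

lemma hasDerivAt_freePoissonCauchyPrimitive (hR : 1 ≤ R) (hz : (R + 1) ^ 2 < z) (hW0 : 0 < W)
    (hW : W ^ 2 = (z - (R ^ 2 - 1)) ^ 2 - 4 * z) (hx : x ∈ Ioo ((R - 1) ^ 2) ((R + 1) ^ 2)) :
    HasDerivAt (freePoissonCauchyPrimitive R z W)
      (z * √(4 * x - (x - (R ^ 2 - 1)) ^ 2) / (x * (z - x))) x := by
  have hQ : 0 < 4 * x - (x - (R ^ 2 - 1)) ^ 2 := by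
    rw [four_mul_sub_sq_eq]
    exact mul_pos (sub_pos.2 hx.2) (sub_pos.2 hx.1)
  have hx0 : 0 < x := (sq_nonneg _).trans_lt hx.1
  have hxz : x < z := hx.2.trans hz
  have h := (((hasDerivAt_freePoissonCauchyPrimitive_term₁ (by linarith) hQ).const_mul z).add
    (hasDerivAt_freePoissonCauchyPrimitive_term₂ hR hx0 hQ)).add
    (hasDerivAt_freePoissonCauchyPrimitive_term₃ (by linarith) hxz hW0 hW hQ)
  refine h.congr_deriv ?_
  set S := √(4 * x - (x - (R ^ 2 - 1)) ^ 2)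
  have hS : 0 < S := sqrt_pos.2 hQ
  have hS2 : S ^ 2 = 4 * x - (x - (R ^ 2 - 1)) ^ 2 := sq_sqrt hQ.le
  have hzx : z - x ≠ 0 := (sub_pos.2 hxz).ne'
  field_simp
  linear_combination (-z) * hS2 - x * hW

lemma continuousOn_freePoissonCauchyPrimitive (hR : 1 ≤ R) (hz : (R + 1) ^ 2 < z) :
    ContinuousOn (freePoissonCauchyPrimitive R z W) (Icc ((R - 1) ^ 2) ((R + 1) ^ 2)) := by
  have hR0 : 0 < R := by linarith
  refine (ContinuousOn.add (by fun_prop) ?_).add ?_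
  · obtain rfl | hR1 := hR.eq_or_lt
    · simpa using continuousOn_const
    refine continuousOn_const.mul (continuous_arcsin.comp_continuousOn
      (ContinuousOn.div (by fun_prop) (by fun_prop) fun x hx => ?_))
    have : 0 < x := lt_of_lt_of_le (by nlinarith) hx.1
    positivity
  · refine continuousOn_const.mul (continuous_arcsin.comp_continuousOn
      (ContinuousOn.div (by fun_prop) (by fun_prop) fun x hx => ?_))
    have : 0 < z - x := by linarith [hx.2]
    positivity

lemma freePoissonCauchyPrimitive_sub (hR : 1 ≤ R) (hz : (R + 1) ^ 2 < z) :
    freePoissonCauchyPrimitive R z W ((R + 1) ^ 2) - freePoissonCauchyPrimitive R z W ((R - 1) ^ 2)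
      = π * (z - (R ^ 2 - 1) - W) := by
  have hR0 : 0 < R := by linarith
  have hzb : z - (R + 1) ^ 2 ≠ 0 := (sub_pos.2 hz).ne'
  have hza : z - (R - 1) ^ 2 ≠ 0 := by nlinarith
  have hterm₂ : (R ^ 2 - 1) * arcsin (((R ^ 2 - 1) ^ 2 - (R ^ 2 + 1) * (R - 1) ^ 2)
      / (2 * R * (R - 1) ^ 2)) = (R ^ 2 - 1) * (π / 2) := by
    obtain rfl | hR1 := hR.eq_or_lt
    · simp
    have : R - 1 ≠ 0 := by linarith
    rw [← arcsin_one]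
    congr 2
    field_simp
    ring
  have h₁ : ((R + 1) ^ 2 - (R ^ 2 + 1)) / (2 * R) = 1 := by field_simp; ring
  have h₂ : ((R - 1) ^ 2 - (R ^ 2 + 1)) / (2 * R) = -1 := by field_simp; ring
  have h₃ : ((R ^ 2 - 1) ^ 2 - (R ^ 2 + 1) * (R + 1) ^ 2) / (2 * R * (R + 1) ^ 2) = -1 := by
    field_simp; ring
  have h₄ : (4 * R ^ 2 - (z - (R ^ 2 + 1)) * ((R + 1) ^ 2 - (R ^ 2 + 1)))
      / (2 * R * (z - (R + 1) ^ 2)) = -1 := by field_simp; ring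
  have h₅ : (4 * R ^ 2 - (z - (R ^ 2 + 1)) * ((R - 1) ^ 2 - (R ^ 2 + 1)))
      / (2 * R * (z - (R - 1) ^ 2)) = 1 := by field_simp; ring
  simp only [freePoissonCauchyPrimitive, hterm₂, h₁, h₂, h₃, h₄, h₅, arcsin_one,
    arcsin_neg_one]
  ring

lemma integral_freePoissonDensity_div_sub (hR : 1 ≤ R) (hz : (R + 1) ^ 2 < z)
    (hW0 : 0 < W) (hW : W ^ 2 = (z - (R ^ 2 - 1)) ^ 2 - 4 * z) :
    ∫ x in (R - 1) ^ 2..(R + 1) ^ 2,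
        √(4 * x - (x - (R ^ 2 - 1)) ^ 2) / (2 * π * x) * (1 / (z - x))
      = (z - (R ^ 2 - 1) - W) / (2 * z) := by
  have hab : (R - 1) ^ 2 ≤ (R + 1) ^ 2 := by nlinarith
  have hz0 : 0 < z := (sq_nonneg _).trans_lt hz
  have hderiv : ∀ x ∈ Ioo ((R - 1) ^ 2) ((R + 1) ^ 2),
      HasDerivAt (fun x => freePoissonCauchyPrimitive R z W x / (2 * π * z))
        (√(4 * x - (x - (R ^ 2 - 1)) ^ 2) / (2 * π * x) * (1 / (z - x))) x := fun x hx =>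
    ((hasDerivAt_freePoissonCauchyPrimitive hR hz hW0 hW hx).div_const _).congr_deriv (by
      field_simp)
  have hcont := (continuousOn_freePoissonCauchyPrimitive (W := W) hR hz).div_const (2 * π * z)
  have hint := (intervalIntegrable_iff_integrableOn_Ioc_of_le hab).2
    (integrableOn_deriv_of_nonneg hcont hderiv fun x hx => by
      have : 0 < x := (sq_nonneg _).trans_lt hx.1
      have : 0 < z - x := by linarith [hx.2]
      positivity)
  rw [integral_eq_sub_of_hasDerivAt_of_le hab hcont hderiv hint, ← sub_div,
    freePoissonCauchyPrimitive_sub hR hz]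
  field_simp

end CauchyPrimitive

/-- For every real `α ≥ 1` and every real `z > (√α + 1)²`, the Cauchy transform of
`μ_α` is `∫ 1/(z − x) dμ_α(x) = (z − (α−1) − √((z − (α−1))² − 4z)) / (2z)`. -/
theorem stmt13 (α : ℝ) (hα : 1 ≤ α) (z : ℝ) (hz : (Real.sqrt α + 1) ^ 2 < z) :
    (∫ x, 1 / (z - x) ∂(freePoissonLaw α)) =
      (z - (α - 1) - Real.sqrt ((z - (α - 1)) ^ 2 - 4 * z)) / (2 * z) := by
  obtain ⟨R, hR, rfl⟩ : ∃ R, 1 ≤ R ∧ R ^ 2 = α :=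
    ⟨√α, one_le_sqrt.2 hα, sq_sqrt (by linarith)⟩
  rw [sqrt_sq (by linarith)] at hz
  have hdisc : 0 < (z - (R ^ 2 - 1)) ^ 2 - 4 * z := by
    have : (z - (R ^ 2 - 1)) ^ 2 - 4 * z = (z - (R + 1) ^ 2) * (z - (R - 1) ^ 2) := by ring
    rw [this]
    exact mul_pos (by linarith) (by nlinarith)
  rw [integral_freePoissonLaw, sqrt_sq (by linarith)]
  exact integral_freePoissonDensity_div_sub hR hz (sqrt_pos.2 hdisc) (sq_sqrt hdisc.le)
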